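/- Let (X₁,Y₁) and (X₂,Y₂) be pairs of jointly distributed random variables, with X₁,X₂ supported on a finite set 𝒳 and Y₁,Y₂ supported on a finite set 𝒴. Let δ = Δ((X₁,Y₁),(X₂,Y₂)) be the total variation distance of the joint distributions. Then |H(X₁|Y₁) - H(X₂|Y₂)| ≤ 1 + 6δ·log₂|𝒳|. -/

import Mathlib

open Finset

noncomputable section

/-- `p` is a probability mass function on the finite type `Ω`. -/
def IsPMF {Ω : Type*} [Fintype Ω] (p : Ω → ℝ) : Prop :=
  (∀ ω, 0 ≤ p ω) ∧ ∑ ω, p ω = 1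

/-- Probability that the random variable `X` equals `x` under `p`. -/
def pr {Ω α : Type*} [Fintype Ω] [DecidableEq α] (p : Ω → ℝ) (X : Ω → α) (x : α) : ℝ :=
  ∑ ω, if X ω = x then p ω else 0

/-- Shannon entropy (base 2) of a distribution `q` on a finite type. -/
def Hq {α : Type*} [Fintype α] (q : α → ℝ) : ℝ :=
  ∑ x, -(q x * Real.logb 2 (q x))

/-- Shannon entropy (base 2) of the random variable `X` under `p`. -/
def Hent {Ω α : Type*} [Fintype Ω] [Fintype α] [DecidableEq α] (p : Ω → ℝ) (X : Ω → α) : ℝ :=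
  Hq (pr p X)

/-- Conditional entropy `H(X|Y) = H(X,Y) - H(Y)`. -/
def condH {Ω α β : Type*} [Fintype Ω] [Fintype α] [Fintype β] [DecidableEq α] [DecidableEq β]
    (p : Ω → ℝ) (X : Ω → α) (Y : Ω → β) : ℝ :=
  Hent p (fun ω => (X ω, Y ω)) - Hent p Y

/-- Mutual information `I(X;Y)`. -/
def MI {Ω α β : Type*} [Fintype Ω] [Fintype α] [Fintype β] [DecidableEq α] [DecidableEq β]
    (p : Ω → ℝ) (X : Ω → α) (Y : Ω → β) : ℝ :=
  Hent p X + Hent p Y - Hent p (fun ω => (X ω, Y ω))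

/-- Conditional mutual information `I(X;Y|Z) = H(X|Z) - H(X|(Y,Z))`. -/
def condMI {Ω α β γ : Type*} [Fintype Ω] [Fintype α] [Fintype β] [Fintype γ]
    [DecidableEq α] [DecidableEq β] [DecidableEq γ]
    (p : Ω → ℝ) (X : Ω → α) (Y : Ω → β) (Z : Ω → γ) : ℝ :=
  condH p X Z - condH p X (fun ω => (Y ω, Z ω))

/-- Total variation distance between distributions on a finite type. -/
def TV {α : Type*} [Fintype α] (q₁ q₂ : α → ℝ) : ℝ :=
  (∑ x, |q₁ x - q₂ x|) / 2

/-- Binary entropy function (base 2). -/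
def binEnt (d : ℝ) : ℝ :=
  -(d * Real.logb 2 d) - ((1 - d) * Real.logb 2 (1 - d))

/-- Min-entropy (base 2) of a distribution on a nonempty finite type. -/
def Hinf {α : Type*} [Fintype α] [Nonempty α] (q : α → ℝ) : ℝ :=
  -Real.logb 2 (⨆ x, q x)


/-!
Measure entropy in nats and write `condEntropy J = ∑ y, m_y · H(J(·, y) / m_y)`, where `m_y` is
the mass of the fibre over `y`. The weighted entropy `u ↦ m · H(u / m)` is superadditive, by
concavity of `t ↦ -t log t`, and subadditive up to a binary entropy, at most `m · log 2`, by
subadditivity of `t ↦ -t log t`. Write `J = J ⊓ K + (J - J ⊓ K)` and `K = J ⊓ K + (K - J ⊓ K)`,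
where both remainders have mass at most `‖J - K‖₁ = 2δ`. Then `J` has at least the conditional
entropy of `J ⊓ K`, and `K` has at most that plus `2δ log |𝒳| + log 2`. In bits this is
`|H(X₁|Y₁) - H(X₂|Y₂)| ≤ 1 + 2δ log₂ |𝒳|`.
-/

open Real

lemma Real.negMulLog_add_le {a b : ℝ} (ha : 0 ≤ a) (hb : 0 ≤ b) :
    negMulLog (a + b) ≤ negMulLog a + negMulLog b := by
  have key : ∀ {s t : ℝ}, 0 ≤ s → 0 ≤ t → s * log s ≤ s * log (s + t) := by
    intro s t hs ht
    rcases hs.eq_or_lt with rfl | hs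
    · simp
    · exact mul_le_mul_of_nonneg_left (log_le_log hs (by linarith)) hs.le
  have hab := key ha hb
  have hba := key hb ha
  rw [add_comm b] at hba
  simp only [negMulLog_eq_neg, add_mul]
  linarith

section ScaledEntropy

variable {α : Type*} [Fintype α]

lemma sum_negMulLog_le_log_card {p : α → ℝ} (hp : 0 ≤ p) (hp1 : ∑ x, p x = 1) :
    ∑ x, negMulLog (p x) ≤ log (Fintype.card α) := by
  have hN : (0 : ℝ) < Fintype.card α := by
    have := univ_nonempty_iff.1 (nonempty_of_sum_ne_zero (by rw [hp1]; exact one_ne_zero))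
    exact_mod_cast Fintype.card_pos
  have jensen := concaveOn_negMulLog.le_map_sum (t := univ) (w := fun _ => (Fintype.card α : ℝ)⁻¹)
    (p := p) (fun _ _ => by positivity) (by simp [card_univ]; field_simp) (fun x _ => hp x)
  have hinv :
      negMulLog (Fintype.card α : ℝ)⁻¹ = (Fintype.card α : ℝ)⁻¹ * log (Fintype.card α) := by
    simp [negMulLog, log_inv]
  simp only [smul_eq_mul, ← mul_sum, hp1, mul_one, hinv] at jensen
  exact le_of_mul_le_mul_left jensen (inv_pos.2 hN)

/-- The entropy `m · H(u / m)` in nats of the normalisation of `u`, weighted by its mass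
`m = ∑ x, u x`. -/
def scaledEntropy (u : α → ℝ) : ℝ := ∑ x, negMulLog (u x) - negMulLog (∑ x, u x)

@[simp] lemma scaledEntropy_zero : scaledEntropy (0 : α → ℝ) = 0 := by simp [scaledEntropy]

lemma scaledEntropy_eq_mul_sum {u : α → ℝ} (hu : ∑ x, u x ≠ 0) :
    scaledEntropy u = (∑ x, u x) * ∑ x, negMulLog (u x / ∑ y, u y) := by
  unfold scaledEntropy
  generalize hm : ∑ x, u x = m at hu ⊢
  have hsplit : ∀ x, negMulLog (u x) = u x / m * negMulLog m + m * negMulLog (u x / m) := by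
    intro x
    rw [← negMulLog_mul, mul_div_cancel₀ _ hu]
  simp only [hsplit, sum_add_distrib, ← sum_mul, ← mul_sum, ← sum_div, hm, div_self hu, one_mul,
    add_sub_cancel_left]

lemma scaledEntropy_nonneg {u : α → ℝ} (hu : 0 ≤ u) : 0 ≤ scaledEntropy u := by
  rcases eq_or_ne (∑ x, u x) 0 with hm | hm
  · rw [(Fintype.sum_eq_zero_iff_of_nonneg hu).1 hm, scaledEntropy_zero]
  have hm' : 0 < ∑ x, u x := (sum_nonneg fun x _ => hu x).lt_of_ne' hm
  rw [scaledEntropy_eq_mul_sum hm]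
  refine mul_nonneg hm'.le (sum_nonneg fun x _ => negMulLog_nonneg (div_nonneg (hu x) hm'.le) ?_)
  exact (div_le_one hm').2 (single_le_sum (fun y _ => hu y) (mem_univ x))

lemma scaledEntropy_le_mul_log_card {u : α → ℝ} (hu : 0 ≤ u) :
    scaledEntropy u ≤ (∑ x, u x) * log (Fintype.card α) := by
  rcases eq_or_ne (∑ x, u x) 0 with hm | hm
  · rw [(Fintype.sum_eq_zero_iff_of_nonneg hu).1 hm]
    simp
  have hm' : 0 < ∑ x, u x := (sum_nonneg fun x _ => hu x).lt_of_ne' hm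
  rw [scaledEntropy_eq_mul_sum hm]
  refine mul_le_mul_of_nonneg_left (sum_negMulLog_le_log_card ?_ ?_) hm'.le
  · exact fun x => div_nonneg (hu x) hm'.le
  · rw [← sum_div, div_self hm]

lemma scaledEntropy_add_ge {u v : α → ℝ} (hu : 0 ≤ u) (hv : 0 ≤ v) :
    scaledEntropy u + scaledEntropy v ≤ scaledEntropy (u + v) := by
  rcases eq_or_ne (∑ x, u x) 0 with hm | hm
  · rw [(Fintype.sum_eq_zero_iff_of_nonneg hu).1 hm, scaledEntropy_zero, zero_add, zero_add]
  rcases eq_or_ne (∑ x, v x) 0 with hn | hn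
  · rw [(Fintype.sum_eq_zero_iff_of_nonneg hv).1 hn, scaledEntropy_zero, add_zero, add_zero]
  have hm' : 0 < ∑ x, u x := (sum_nonneg fun x _ => hu x).lt_of_ne' hm
  have hn' : 0 < ∑ x, v x := (sum_nonneg fun x _ => hv x).lt_of_ne' hn
  have hsum : ∑ x, (u + v) x = ∑ x, u x + ∑ x, v x := sum_add_distrib
  rw [scaledEntropy_eq_mul_sum hm, scaledEntropy_eq_mul_sum hn,
    scaledEntropy_eq_mul_sum (by rw [hsum]; positivity), hsum]
  set m := ∑ x, u x
  set n := ∑ x, v x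
  have hpt : ∀ x, m * negMulLog (u x / m) + n * negMulLog (v x / n) ≤
      (m + n) * negMulLog ((u + v) x / (m + n)) := by
    intro x
    have hconc := concaveOn_negMulLog.2 (Set.mem_Ici.2 (div_nonneg (hu x) hm'.le))
      (Set.mem_Ici.2 (div_nonneg (hv x) hn'.le)) (div_nonneg hm'.le (by positivity : 0 ≤ m + n))
      (div_nonneg hn'.le (by positivity : 0 ≤ m + n)) (by field_simp)
    have hcomb : m / (m + n) * (u x / m) + n / (m + n) * (v x / n) = (u + v) x / (m + n) := by
      rw [Pi.add_apply, add_div]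
      congr 1 <;> field_simp
    simp only [smul_eq_mul, hcomb] at hconc
    calc m * negMulLog (u x / m) + n * negMulLog (v x / n)
        = (m + n) * (m / (m + n) * negMulLog (u x / m) + n / (m + n) * negMulLog (v x / n)) := by
          field_simp
      _ ≤ (m + n) * negMulLog ((u + v) x / (m + n)) :=
          mul_le_mul_of_nonneg_left hconc (by positivity)
  rw [mul_sum, mul_sum, mul_sum, ← sum_add_distrib]
  exact sum_le_sum fun x _ => hpt x

lemma scaledEntropy_add_le {u v : α → ℝ} (hu : 0 ≤ u) (hv : 0 ≤ v) :
    scaledEntropy (u + v) ≤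
      scaledEntropy u + scaledEntropy v + (∑ x, u x + ∑ x, v x) * log 2 := by
  have hbin : negMulLog (∑ x, u x) + negMulLog (∑ x, v x) - negMulLog (∑ x, u x + ∑ x, v x) ≤
      (∑ x, u x + ∑ x, v x) * log 2 := by
    have hmn : 0 ≤ ![∑ x, u x, ∑ x, v x] := by
      intro i
      fin_cases i
      exacts [sum_nonneg fun x _ => hu x, sum_nonneg fun x _ => hv x]
    simpa [scaledEntropy, Fin.sum_univ_two] using scaledEntropy_le_mul_log_card hmn
  have hpt : ∑ x, negMulLog (u x + v x) ≤ ∑ x, negMulLog (u x) + ∑ x, negMulLog (v x) := by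
    rw [← sum_add_distrib]
    exact sum_le_sum fun x _ => negMulLog_add_le (hu x) (hv x)
  simp only [scaledEntropy, Pi.add_apply, sum_add_distrib] at hpt ⊢
  linarith

end ScaledEntropy

section CondEntropy

variable {α β : Type*} [Fintype α] [Fintype β]

/-- The conditional entropy `H(X | Y)` in nats of a joint distribution `J` of `(X, Y)`. -/
def condEntropy (J : α × β → ℝ) : ℝ := ∑ y, scaledEntropy fun x => J (x, y)

variable {J K : α × β → ℝ}

lemma condEntropy_nonneg (hJ : 0 ≤ J) : 0 ≤ condEntropy J :=
  sum_nonneg fun y _ => scaledEntropy_nonneg fun x => hJ (x, y)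

lemma condEntropy_le_mul_log_card (hJ : 0 ≤ J) :
    condEntropy J ≤ (∑ z, J z) * log (Fintype.card α) := by
  rw [Fintype.sum_prod_type_right, sum_mul]
  exact sum_le_sum fun y _ => scaledEntropy_le_mul_log_card fun x => hJ (x, y)

lemma condEntropy_add_ge (hJ : 0 ≤ J) (hK : 0 ≤ K) :
    condEntropy J + condEntropy K ≤ condEntropy (J + K) := by
  rw [condEntropy, condEntropy, ← sum_add_distrib]
  exact sum_le_sum fun y _ => scaledEntropy_add_ge (fun x => hJ (x, y)) (fun x => hK (x, y))

lemma condEntropy_add_le (hJ : 0 ≤ J) (hK : 0 ≤ K) :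
    condEntropy (J + K) ≤ condEntropy J + condEntropy K + (∑ z, J z + ∑ z, K z) * log 2 := by
  calc condEntropy (J + K)
      ≤ ∑ y, ((scaledEntropy fun x => J (x, y)) + (scaledEntropy fun x => K (x, y)) +
          (∑ x, J (x, y) + ∑ x, K (x, y)) * log 2) :=
        sum_le_sum fun y _ => scaledEntropy_add_le (fun x => hJ (x, y)) (fun x => hK (x, y))
    _ = condEntropy J + condEntropy K + (∑ z, J z + ∑ z, K z) * log 2 := by
        simp only [condEntropy, Fintype.sum_prod_type_right, sum_add_distrib, ← sum_mul]

lemma condEntropy_sub_le (hJ : 0 ≤ J) (hK : 0 ≤ K) :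
    condEntropy K - condEntropy J ≤
      (∑ z, |J z - K z|) * log (Fintype.card α) + (∑ z, K z) * log 2 := by
  have hw : 0 ≤ J ⊓ K := le_inf hJ hK
  have hJw : 0 ≤ J - J ⊓ K := sub_nonneg.2 inf_le_left
  have hKw : 0 ≤ K - J ⊓ K := sub_nonneg.2 inf_le_right
  have hlower : condEntropy (J ⊓ K) ≤ condEntropy J := by
    have := condEntropy_add_ge hw hJw
    rw [add_sub_cancel] at this
    linarith [condEntropy_nonneg hJw]
  have hupper : condEntropy K ≤
      condEntropy (J ⊓ K) + condEntropy (K - J ⊓ K) + (∑ z, K z) * log 2 := by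
    have hmass : ∑ z, (J ⊓ K) z + ∑ z, (K - J ⊓ K) z = ∑ z, K z := by
      rw [← sum_add_distrib]
      simp
    simpa only [add_sub_cancel, hmass] using condEntropy_add_le hw hKw
  have hrest : condEntropy (K - J ⊓ K) ≤ (∑ z, |J z - K z|) * log (Fintype.card α) := by
    refine (condEntropy_le_mul_log_card hKw).trans
      (mul_le_mul_of_nonneg_right (sum_le_sum fun z _ => ?_) (log_natCast_nonneg _))
    rw [Pi.sub_apply, Pi.inf_apply, abs_sub_comm]
    rcases le_total (J z) (K z) with h | h
    · rw [inf_eq_left.2 h]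
      exact le_abs_self _
    · rw [inf_eq_right.2 h, sub_self]
      exact abs_nonneg _
  linarith

theorem abs_condEntropy_sub_le (hJ : 0 ≤ J) (hK : 0 ≤ K) (hJ1 : ∑ z, J z = 1)
    (hK1 : ∑ z, K z = 1) :
    |condEntropy J - condEntropy K| ≤ (∑ z, |J z - K z|) * log (Fintype.card α) + log 2 := by
  refine abs_sub_le_iff.2 ⟨?_, ?_⟩
  · simpa only [hJ1, one_mul, abs_sub_comm] using condEntropy_sub_le hK hJ
  · simpa only [hK1, one_mul] using condEntropy_sub_le hJ hK

end CondEntropy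

section Bits

variable {Ω α β : Type*} [Fintype Ω]

lemma pr_nonneg [DecidableEq α] {p : Ω → ℝ} (hp : ∀ ω, 0 ≤ p ω) (X : Ω → α) : 0 ≤ pr p X :=
  fun _ => sum_nonneg fun ω _ => by split_ifs <;> simp [hp ω]

lemma sum_pr [Fintype α] [DecidableEq α] (p : Ω → ℝ) (X : Ω → α) : ∑ x, pr p X x = ∑ ω, p ω := by
  unfold pr
  rw [sum_comm]
  simp

lemma sum_pr_pair [Fintype α] [DecidableEq α] [DecidableEq β] (p : Ω → ℝ) (X : Ω → α)
    (Y : Ω → β) (y : β) :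
    ∑ x, pr p (fun ω => (X ω, Y ω)) (x, y) = pr p Y y := by
  simp only [pr, Prod.ext_iff, ite_and]
  rw [sum_comm]
  simp

lemma Hq_eq_sum_negMulLog_div [Fintype α] (q : α → ℝ) :
    Hq q = (∑ x, negMulLog (q x)) / log 2 := by
  simp only [Hq, negMulLog_eq_neg, logb, sum_div, neg_div, mul_div_assoc]

lemma condH_eq_condEntropy_div [Fintype α] [Fintype β] [DecidableEq α] [DecidableEq β]
    (p : Ω → ℝ) (X : Ω → α) (Y : Ω → β) :
    condH p X Y = condEntropy (pr p fun ω => (X ω, Y ω)) / log 2 := by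
  simp only [condH, Hent, Hq_eq_sum_negMulLog_div, condEntropy, scaledEntropy, sum_pr_pair,
    Fintype.sum_prod_type_right, sum_sub_distrib, sub_div]

end Bits

/-- If `δ = Δ((X₁,Y₁),(X₂,Y₂))` is the total variation distance of the
joint distributions, then `|H(X₁|Y₁) - H(X₂|Y₂)| ≤ 1 + 6δ·log₂|𝒳|`. -/
theorem stmt_6 {Ω₁ Ω₂ 𝒳 𝒴 : Type*} [Fintype Ω₁] [Fintype Ω₂] [Fintype 𝒳] [Fintype 𝒴]
    [DecidableEq 𝒳] [DecidableEq 𝒴]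
    (p₁ : Ω₁ → ℝ) (p₂ : Ω₂ → ℝ) (h₁ : IsPMF p₁) (h₂ : IsPMF p₂)
    (X₁ : Ω₁ → 𝒳) (Y₁ : Ω₁ → 𝒴) (X₂ : Ω₂ → 𝒳) (Y₂ : Ω₂ → 𝒴) (δ : ℝ)
    (hδ : δ = TV (pr p₁ (fun ω => (X₁ ω, Y₁ ω))) (pr p₂ (fun ω => (X₂ ω, Y₂ ω)))) :
    |condH p₁ X₁ Y₁ - condH p₂ X₂ Y₂| ≤ 1 + 6 * δ * Real.logb 2 (Fintype.card 𝒳) := by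
  obtain ⟨hp₁, hs₁⟩ := h₁
  obtain ⟨hp₂, hs₂⟩ := h₂
  have hnats := abs_condEntropy_sub_le (pr_nonneg hp₁ fun ω => (X₁ ω, Y₁ ω))
    (pr_nonneg hp₂ fun ω => (X₂ ω, Y₂ ω)) (by rw [sum_pr, hs₁]) (by rw [sum_pr, hs₂])
  rw [show ∑ z, |_ - _| = 2 * δ by rw [hδ, TV]; ring] at hnats
  have hlog2 : 0 < log 2 := log_pos one_lt_two
  have hδ0 : 0 ≤ δ := by rw [hδ, TV]; positivity
  have hL : 0 ≤ logb 2 (Fintype.card 𝒳) := div_nonneg (log_natCast_nonneg _) hlog2.le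
  calc |condH p₁ X₁ Y₁ - condH p₂ X₂ Y₂|
      ≤ (2 * δ * log (Fintype.card 𝒳) + log 2) / log 2 := by
        rw [condH_eq_condEntropy_div, condH_eq_condEntropy_div, ← sub_div, abs_div,
          abs_of_pos hlog2]
        exact div_le_div_of_nonneg_right hnats hlog2.le
    _ = 1 + 2 * δ * logb 2 (Fintype.card 𝒳) := by
        rw [logb]
        field_simp
        ring
    _ ≤ 1 + 6 * δ * logb 2 (Fintype.card 𝒳) := by linarith [mul_nonneg hδ0 hL]
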